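/- Suppose M : ℕ → (0,∞) satisfies lim_{N→∞} N(ln ln N)²/(M(N)·ln N) = 0, and let L1(β) = 2M(N)·N·ln(2 sinh(2β)) and L2(β) = 2N·ln(cosh β). Then for each fixed t ≥ 0: (i) lim_{N→∞} [ L1(β_c − t/√(4M(N)N ln N)) − L1(β_c) + (t/√(4M(N)N ln N))·4√2·M(N)·N ] = 0, and (ii) lim_{N→∞} [ L2(β_c − t/√(4M(N)N ln N)) − L2(β_c) ] = 0, where β_c = ln(1+√2)/2. -/

import Mathlib

/-! Write `u = t / √(4 M N log N)`. Since `sinh 2βc = 1` and `cosh 2βc = √2`, the linear term in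
(i) is exactly the first-order Taylor term of `L1` at `βc`, and `(log sinh)'' = -1 / sinh²` is
bounded near `2βc`; so the expression in (i) is `O(M N u²) = O(t² / log N)`. The function
`log ∘ cosh` is 1-Lipschitz, so the expression in (ii) is at most `2 N |u|`, and
`(N u)² ≤ t² |N / (M log N)| / 4`, which tends to zero by the hypothesis on `M` because
`(log log N)² ≥ 1` eventually. -/

open Filter

/-- The critical inverse temperature of the two-dimensional Ising model. -/
noncomputable def betac : ℝ := Real.log (1 + Real.sqrt 2) / 2

open Real Set Topology

lemma two_mul_betac : 2 * betac = log (1 + √2) := by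
  rw [betac]; ring

lemma inv_one_add_sqrt_two : (1 + √2)⁻¹ = √2 - 1 := by
  have h : (1 + √2) * (√2 - 1) = 1 := by
    nlinarith [sq_sqrt (zero_le_two : (0 : ℝ) ≤ 2)]
  exact inv_eq_of_mul_eq_one_right h

lemma sinh_two_mul_betac : sinh (2 * betac) = 1 := by
  rw [two_mul_betac, sinh_log (by positivity), inv_one_add_sqrt_two]; ring

lemma cosh_two_mul_betac : cosh (2 * betac) = √2 := by
  rw [two_mul_betac, cosh_log (by positivity), inv_one_add_sqrt_two]; ring

lemma betac_pos : 0 < betac := by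
  have : 0 < log (1 + √2) := log_pos (by simp)
  rw [betac]; positivity

theorem Convex.abs_sub_le_mul_sq_of_hasDerivWithinAt {f f' f'' : ℝ → ℝ} {s : Set ℝ}
    {a x K : ℝ} (hs : Convex ℝ s) (ha : a ∈ s) (hx : x ∈ s)
    (hf : ∀ y ∈ s, HasDerivWithinAt f (f' y) s y)
    (hf' : ∀ y ∈ s, HasDerivWithinAt f' (f'' y) s y)
    (hf'' : ∀ y ∈ s, |f'' y| ≤ K) (hf'a : f' a = 0) :
    |f x - f a| ≤ K * (x - a) ^ 2 := by
  have hK : 0 ≤ K := (abs_nonneg _).trans (hf'' a ha)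
  have hslope : ∀ y ∈ s, |f' y| ≤ K * |y - a| := fun y hy => by
    simpa [hf'a] using hs.norm_image_sub_le_of_norm_hasDerivWithin_le hf' hf'' ha hy
  let t := s ∩ Metric.closedBall a |x - a|
  have hbound : ∀ y ∈ t, ‖f' y‖ ≤ K * |x - a| := fun y hy =>
    (hslope y hy.1).trans (mul_le_mul_of_nonneg_left (Metric.mem_closedBall.mp hy.2) hK)
  have := (hs.inter (convex_closedBall a |x - a|)).norm_image_sub_le_of_norm_hasDerivWithin_le
    (fun y hy => (hf y hy.1).mono inter_subset_left) hbound
    ⟨ha, Metric.mem_closedBall_self (abs_nonneg _)⟩ ⟨hx, by simp [Real.dist_eq]⟩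
  rwa [Real.norm_eq_abs, Real.norm_eq_abs, mul_assoc, ← sq, sq_abs] at this

lemma hasDerivAt_log_two_mul_sinh {x : ℝ} (hx : 0 < sinh x) :
    HasDerivAt (fun x => log (2 * sinh x)) (cosh x / sinh x) x := by
  convert ((hasDerivAt_sinh x).const_mul 2).log (by positivity) using 1
  field_simp

lemma hasDerivAt_cosh_div_sinh {x : ℝ} (hx : sinh x ≠ 0) :
    HasDerivAt (fun x => cosh x / sinh x) (-1 / sinh x ^ 2) x := by
  refine ((hasDerivAt_cosh x).div (hasDerivAt_sinh x) hx).congr_deriv ?_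
  field_simp
  linear_combination -cosh_sq x

lemma abs_log_two_mul_sinh_sub_add_le {u : ℝ} (hu : u ≤ betac / 2) :
    |log (2 * sinh (2 * (betac - u))) - log (2 * sinh (2 * betac)) + 2 * √2 * u|
      ≤ 4 / sinh betac ^ 2 * u ^ 2 := by
  have hsinh : ∀ y ∈ Ici betac, 0 < sinh y :=
    fun y hy => sinh_pos_iff.mpr (betac_pos.trans_le hy)
  have key := (convex_Ici betac).abs_sub_le_mul_sq_of_hasDerivWithinAt
    (f := fun x => log (2 * sinh x) - √2 * x) (f' := fun x => cosh x / sinh x - √2)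
    (f'' := fun x => -1 / sinh x ^ 2) (K := 1 / sinh betac ^ 2)
    (a := 2 * betac) (x := 2 * (betac - u)) (by simp; linarith [betac_pos])
    (by simp; linarith)
    (fun y hy => ((hasDerivAt_log_two_mul_sinh (hsinh y hy)).sub
      ((hasDerivAt_id y).const_mul √2) |>.congr_deriv (by simp)).hasDerivWithinAt)
    (fun y hy => ((hasDerivAt_cosh_div_sinh (hsinh y hy).ne').sub_const √2).hasDerivWithinAt)
    (fun y hy => by
      rw [abs_div, abs_neg, abs_one, abs_of_pos (pow_pos (hsinh y hy) 2)]
      have hb := hsinh betac self_mem_Ici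
      exact one_div_le_one_div_of_le (pow_pos hb 2)
        (pow_le_pow_left₀ hb.le (sinh_le_sinh.mpr hy) 2))
    (by simp [sinh_two_mul_betac, cosh_two_mul_betac])
  convert key using 1
  · congr 1; ring
  · ring

lemma abs_log_cosh_sub_log_cosh_le (x y : ℝ) :
    |log (cosh x) - log (cosh y)| ≤ |x - y| := by
  have hderiv : ∀ z ∈ (univ : Set ℝ), HasDerivWithinAt (fun z => log (cosh z)) (tanh z) univ z :=
    fun z _ => by
      rw [tanh_eq_sinh_div_cosh]
      exact ((hasDerivAt_cosh z).log (cosh_pos z).ne').hasDerivWithinAt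
  simpa using convex_univ.norm_image_sub_le_of_norm_hasDerivWithin_le hderiv
    (fun z _ => (abs_tanh_lt_one z).le) (mem_univ y) (mem_univ x)

lemma abs_div_sqrt_sq_mul_le (t r : ℝ) : |(t / √r) ^ 2 * r| ≤ t ^ 2 := by
  rcases le_or_gt r 0 with hr | hr
  · simp [sqrt_eq_zero'.mpr hr, sq_nonneg]
  · rw [div_pow, sq_sqrt hr.le, div_mul_cancel₀ _ hr.ne', abs_sq]

lemma sq_mul_div_sqrt_le (t m : ℝ) {n ℓ : ℝ} (hn : 0 < n) (hℓ : 0 < ℓ) :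
    (n * (t / √(4 * m * n * ℓ))) ^ 2 ≤ t ^ 2 / 4 * |n / (m * ℓ)| := by
  rcases eq_or_ne m 0 with rfl | hm
  · simp
  calc (n * (t / √(4 * m * n * ℓ))) ^ 2
      = (t / √(4 * m * n * ℓ)) ^ 2 * (4 * m * n * ℓ) * (n / (4 * m * ℓ)) := by
        field_simp
    _ ≤ |(t / √(4 * m * n * ℓ)) ^ 2 * (4 * m * n * ℓ)| * |n / (4 * m * ℓ)| := by
        rw [← abs_mul]; exact le_abs_self _
    _ ≤ t ^ 2 * |n / (4 * m * ℓ)| := by gcongr; exact abs_div_sqrt_sq_mul_le _ _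
    _ = t ^ 2 / 4 * |n / (m * ℓ)| := by
        rw [show n / (4 * m * ℓ) = n / (m * ℓ) / 4 by ring, abs_div,
          abs_of_pos (four_pos : (0 : ℝ) < 4)]
        ring

lemma abs_mul_log_two_mul_sinh_sub_add_le (t m n : ℝ) {ℓ : ℝ} (hℓ : 0 < ℓ)
    (hu : t / √(4 * m * n * ℓ) ≤ betac / 2) :
    |2 * m * n * log (2 * sinh (2 * (betac - t / √(4 * m * n * ℓ))))
        - 2 * m * n * log (2 * sinh (2 * betac))
        + t / √(4 * m * n * ℓ) * (4 * √2 * m * n)|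
      ≤ 4 / sinh betac ^ 2 * t ^ 2 / (2 * ℓ) := by
  set u := t / √(4 * m * n * ℓ)
  calc _ = |2 * m * n| * |log (2 * sinh (2 * (betac - u)))
            - log (2 * sinh (2 * betac)) + 2 * √2 * u| := by
        rw [← abs_mul]; ring_nf
    _ ≤ |2 * m * n| * (4 / sinh betac ^ 2 * u ^ 2) :=
        mul_le_mul_of_nonneg_left (abs_log_two_mul_sinh_sub_add_le hu) (abs_nonneg _)
    _ = 4 / sinh betac ^ 2 * |u ^ 2 * (4 * m * n * ℓ)| / (2 * ℓ) := by
        rw [show u ^ 2 * (4 * m * n * ℓ) = 2 * ℓ * (2 * m * n * u ^ 2) by ring,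
          abs_mul (2 * ℓ), abs_of_pos (by positivity : 0 < 2 * ℓ), abs_mul _ (u ^ 2), abs_sq]
        field_simp
    _ ≤ 4 / sinh betac ^ 2 * t ^ 2 / (2 * ℓ) := by
        gcongr; exact abs_div_sqrt_sq_mul_le _ _

section Asymptotics

variable {M : ℕ → ℝ}

lemma tendsto_natCast_div_mul_log (hM : Tendsto (fun N : ℕ =>
      (N : ℝ) * log (log N) ^ 2 / (M N * log N)) atTop (𝓝 0)) :
    Tendsto (fun N : ℕ => (N : ℝ) / (M N * log N)) atTop (𝓝 0) := by
  have hloglog : Tendsto (fun N : ℕ => log (log N)) atTop atTop :=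
    tendsto_log_atTop.comp (tendsto_log_atTop.comp tendsto_natCast_atTop_atTop)
  refine squeeze_zero_norm'
    (a := fun N : ℕ => ‖(N : ℝ) * log (log N) ^ 2 / (M N * log N)‖) ?_ (by simpa using hM.norm)
  filter_upwards [hloglog.eventually_ge_atTop 1] with N hN
  rw [mul_comm (N : ℝ), mul_div_assoc, norm_mul, norm_pow, norm_eq_abs]
  exact le_mul_of_one_le_left (abs_nonneg _) (one_le_pow₀ (hN.trans (le_abs_self _)))

lemma tendsto_natCast_mul_div_sqrt (hM : Tendsto (fun N : ℕ =>
      (N : ℝ) * log (log N) ^ 2 / (M N * log N)) atTop (𝓝 0)) (t : ℝ) :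
    Tendsto (fun N : ℕ => (N : ℝ) * (t / √(4 * M N * N * log N))) atTop (𝓝 0) := by
  have hbound := ((tendsto_natCast_div_mul_log hM).abs.const_mul (t ^ 2 / 4)).sqrt
  refine squeeze_zero_norm' (a := fun N : ℕ => √(t ^ 2 / 4 * |(N : ℝ) / (M N * log N)|)) ?_
    (by simpa using hbound)
  filter_upwards [eventually_gt_atTop 1] with N hN
  have hN : (1 : ℝ) < N := by exact_mod_cast hN
  exact abs_le_sqrt (sq_mul_div_sqrt_le t (M N) (by linarith) (log_pos hN))

lemma tendsto_div_sqrt (hM : Tendsto (fun N : ℕ =>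
      (N : ℝ) * log (log N) ^ 2 / (M N * log N)) atTop (𝓝 0)) (t : ℝ) :
    Tendsto (fun N : ℕ => t / √(4 * M N * N * log N)) atTop (𝓝 0) := by
  refine squeeze_zero_norm' (a := fun N : ℕ => ‖(N : ℝ) * (t / √(4 * M N * N * log N))‖) ?_
    (by simpa using (tendsto_natCast_mul_div_sqrt hM t).norm)
  filter_upwards [eventually_ge_atTop 1] with N hN
  rw [norm_mul, Real.norm_natCast]
  exact le_mul_of_one_le_left (norm_nonneg _) (by exact_mod_cast hN)

end Asymptotics

theorem stmt15_general (M : ℕ → ℝ)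
    (hM : Tendsto (fun N : ℕ =>
        (N : ℝ) * (Real.log (Real.log N)) ^ 2 / (M N * Real.log N)) atTop (nhds 0))
    (t : ℝ) :
    Tendsto (fun N : ℕ =>
        2 * M N * N *
            Real.log (2 * Real.sinh (2 * (betac - t / Real.sqrt (4 * M N * N * Real.log N))))
          - 2 * M N * N * Real.log (2 * Real.sinh (2 * betac))
          + t / Real.sqrt (4 * M N * N * Real.log N) * (4 * Real.sqrt 2 * M N * N))
      atTop (nhds 0) ∧
    Tendsto (fun N : ℕ =>
        2 * (N : ℝ) *
            Real.log (Real.cosh (betac - t / Real.sqrt (4 * M N * N * Real.log N)))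
          - 2 * N * Real.log (Real.cosh betac))
      atTop (nhds 0) := by
  constructor
  · have hlog : Tendsto (fun N : ℕ => 2 * log N) atTop atTop :=
      (tendsto_log_atTop.comp tendsto_natCast_atTop_atTop).const_mul_atTop two_pos
    refine squeeze_zero_norm' ?_
      (tendsto_const_nhds.div_atTop hlog (a := 4 / sinh betac ^ 2 * t ^ 2))
    filter_upwards [(tendsto_div_sqrt hM t).eventually (eventually_le_nhds (half_pos betac_pos)),
      eventually_gt_atTop 1] with N hsmall hN
    exact abs_mul_log_two_mul_sinh_sub_add_le t (M N) N (log_pos (by exact_mod_cast hN)) hsmall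
  · refine squeeze_zero_norm' ?_
      (((tendsto_natCast_mul_div_sqrt hM t).abs.const_mul 2).trans_eq (by simp))
    refine Eventually.of_forall fun N => ?_
    rw [Real.norm_eq_abs, ← mul_sub, abs_mul, abs_mul 2, abs_two, abs_mul (N : ℝ), mul_assoc]
    gcongr 2 * (_ * ?_)
    simpa using abs_log_cosh_sub_log_cosh_le (betac - t / √(4 * M N * N * log N)) betac

/-- Suppose `M : ℕ → (0,∞)` satisfies `N(ln ln N)²/(M(N)·ln N) → 0`, and let
`L1(β) = 2M(N)N ln(2 sinh 2β)`, `L2(β) = 2N ln(cosh β)`. Then for each fixed `t ≥ 0`: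
(i) `L1(β_c − t/√(4M(N)N ln N)) − L1(β_c) + (t/√(4M(N)N ln N))·4√2·M(N)·N → 0`, and
(ii) `L2(β_c − t/√(4M(N)N ln N)) − L2(β_c) → 0` as `N → ∞`. -/
theorem stmt15 (M : ℕ → ℝ) (hMpos : ∀ N, 0 < M N)
    (hM : Tendsto (fun N : ℕ =>
        (N : ℝ) * (Real.log (Real.log N)) ^ 2 / (M N * Real.log N)) atTop (nhds 0))
    (t : ℝ) (ht : 0 ≤ t) :
    Tendsto (fun N : ℕ =>
        2 * M N * N *
            Real.log (2 * Real.sinh (2 * (betac - t / Real.sqrt (4 * M N * N * Real.log N))))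
          - 2 * M N * N * Real.log (2 * Real.sinh (2 * betac))
          + t / Real.sqrt (4 * M N * N * Real.log N) * (4 * Real.sqrt 2 * M N * N))
      atTop (nhds 0) ∧
    Tendsto (fun N : ℕ =>
        2 * (N : ℝ) *
            Real.log (Real.cosh (betac - t / Real.sqrt (4 * M N * N * Real.log N)))
          - 2 * N * Real.log (Real.cosh betac))
      atTop (nhds 0) :=
  stmt15_general M hM t
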